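/- arXiv:1008.4044 — 2 statements merged into one kernel-verified Lean document; each statement's English description precedes it below -/
import Mathlib

section
/- Let Φ : ℝ → ℝ satisfy Φ(0)=0 and Φ'(x)=exp(-Φ(x)^5/2). Then there exist constants c₁, c₂ > 0 such that for all sufficiently large x, c₁ (ln x)^{1/5} ≤ Φ(x) ≤ c₂ (ln x)^{1/5}. -/
open Real intervalIntegral

noncomputable def myf (t : ℝ) : ℝ := Real.exp (t ^ 5 / 2)

lemma myf_cont : Continuous myf := by
  unfold myf; fun_prop

noncomputable def myF (y : ℝ) : ℝ := ∫ t in (0:ℝ)..y, myf t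

lemma myF_hasDerivAt (y : ℝ) : HasDerivAt myF (myf y) y :=
  (myf_cont.integral_hasStrictDerivAt 0 y).hasDerivAt

lemma myF_nonneg {y : ℝ} (hy : 0 ≤ y) : 0 ≤ myF y := by
  apply intervalIntegral.integral_nonneg hy
  intro t _; exact (Real.exp_pos _).le

lemma myF_mono {y₁ y₂ : ℝ} (h1 : 0 ≤ y₁) (h : y₁ ≤ y₂) : myF y₁ ≤ myF y₂ := by
  have := intervalIntegral.integral_add_adjacent_intervals (μ := MeasureTheory.volume)
    (myf_cont.intervalIntegrable 0 y₁) (myf_cont.intervalIntegrable y₁ y₂)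
  unfold myF
  rw [← this]
  have : 0 ≤ ∫ t in y₁..y₂, myf t :=
    intervalIntegral.integral_nonneg h (fun t _ => (Real.exp_pos _).le)
  linarith

lemma myF_le {y : ℝ} (hy : 0 ≤ y) : myF y ≤ y * Real.exp (y ^ 5 / 2) := by
  have : myF y ≤ ∫ _ in (0:ℝ)..y, Real.exp (y ^ 5 / 2) := by
    apply intervalIntegral.integral_mono_on hy (myf_cont.intervalIntegrable 0 y)
      (intervalIntegrable_const)
    intro t ht
    unfold myf
    apply Real.exp_le_exp.2
    have ht5 : t ^ 5 ≤ y ^ 5 := pow_le_pow_left₀ ht.1 ht.2 5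
    linarith
  simpa using this

lemma myF_ge {y : ℝ} (hy : 1 ≤ y) : Real.exp ((y - 1) ^ 5 / 2) ≤ myF y := by
  have h0 : (0:ℝ) ≤ y - 1 := by linarith
  have hadd := intervalIntegral.integral_add_adjacent_intervals (μ := MeasureTheory.volume)
    (myf_cont.intervalIntegrable 0 (y-1)) (myf_cont.intervalIntegrable (y-1) y)
  have h1 : 0 ≤ ∫ t in (0:ℝ)..(y-1), myf t :=
    intervalIntegral.integral_nonneg h0 (fun t _ => (Real.exp_pos _).le)
  have h2 : (∫ _ in (y-1)..y, Real.exp ((y-1) ^ 5 / 2)) ≤ ∫ t in (y-1)..y, myf t := by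
    apply intervalIntegral.integral_mono_on (by linarith) intervalIntegrable_const
      (myf_cont.intervalIntegrable _ _)
    intro t ht
    unfold myf
    apply Real.exp_le_exp.2
    have : (y-1) ^ 5 ≤ t ^ 5 := pow_le_pow_left₀ h0 ht.1 5
    linarith
  have h3 : (∫ _ in (y-1)..y, Real.exp ((y-1) ^ 5 / 2)) = Real.exp ((y-1)^5/2) := by
    simp
  unfold myF
  rw [← hadd]
  rw [h3] at h2
  linarith

/-- If `Φ 0 = 0` and `Φ' x = exp (-(Φ x)^5 / 2)`, then there are constants
`c₁, c₂ > 0` with `c₁ (ln x)^{1/5} ≤ Φ x ≤ c₂ (ln x)^{1/5}` for all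
sufficiently large `x`. -/
theorem stmt_3 (Φ : ℝ → ℝ) (h0 : Φ 0 = 0)
    (hderiv : ∀ x : ℝ, HasDerivAt Φ (Real.exp (-(Φ x) ^ 5 / 2)) x) :
    ∃ c₁ c₂ : ℝ, 0 < c₁ ∧ 0 < c₂ ∧
      ∀ᶠ x in Filter.atTop,
        c₁ * (Real.log x) ^ ((1 : ℝ) / 5) ≤ Φ x ∧
        Φ x ≤ c₂ * (Real.log x) ^ ((1 : ℝ) / 5) := by
  -- key identity: myF (Φ x) = x
  have hkey : ∀ x, myF (Φ x) = x := by
    have hg : ∀ x, HasDerivAt (fun x => myF (Φ x) - x) 0 x := by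
      intro x
      have h1 := (myF_hasDerivAt (Φ x)).comp x (hderiv x)
      have h2 := h1.sub (hasDerivAt_id x)
      have : myf (Φ x) * Real.exp (-Φ x ^ 5 / 2) - 1 = 0 := by
        unfold myf
        rw [← Real.exp_add]
        ring_nf
        simp
      rwa [this] at h2
    have hconst := is_const_of_deriv_eq_zero
      (fun x => (hg x).differentiableAt) (fun x => (hg x).deriv)
    intro x
    have := hconst x 0
    simp only [h0] at this
    have hF0 : myF 0 = 0 := intervalIntegral.integral_same
    rw [hF0] at this
    linarith
  -- Φ strictly monotone
  have hmono : StrictMono Φ :=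
    strictMono_of_hasDerivAt_pos hderiv (fun x => Real.exp_pos _)
  have hΦnonneg : ∀ x, 0 ≤ x → 0 ≤ Φ x := by
    intro x hx
    rcases eq_or_lt_of_le hx with h | h
    · rw [← h, h0]
    · rw [← h0]; exact (hmono h).le
  refine ⟨1, 3, one_pos, by norm_num, ?_⟩
  filter_upwards [Filter.eventually_ge_atTop (max (Real.exp 1) (2 * Real.exp 16 + 1))] with x hx
  have hxe : Real.exp 1 ≤ x := le_trans (le_max_left _ _) hx
  have hx16 : 2 * Real.exp 16 + 1 ≤ x := le_trans (le_max_right _ _) hx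
  have hx0 : (0:ℝ) < x := lt_of_lt_of_le (Real.exp_pos 1) hxe
  have hΦ0 : 0 ≤ Φ x := hΦnonneg x hx0.le
  have hlog1 : 1 ≤ Real.log x := by
    rw [Real.le_log_iff_exp_le hx0]; exact hxe
  -- Φ x ≥ 2
  have hΦ2 : 2 ≤ Φ x := by
    by_contra hlt
    push_neg at hlt
    have h1 : myF (Φ x) ≤ myF 2 := myF_mono hΦ0 hlt.le
    have h2 : myF 2 ≤ 2 * Real.exp (2 ^ 5 / 2) := myF_le (by norm_num)
    rw [hkey x] at h1
    norm_num at h2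
    linarith
  -- lower bound
  have hlb : (Real.log x) ^ ((1:ℝ)/5) ≤ Φ x := by
    have hΦexp : Φ x ≤ Real.exp (Φ x ^ 5 / 2) := by
      have h1 : Φ x ≤ Real.exp (Φ x) := (Real.add_one_le_exp (Φ x)).trans' (by linarith)
      have h16 : (16:ℝ) ≤ Φ x ^ 4 := by
        have := pow_le_pow_left₀ (by norm_num : (0:ℝ) ≤ 2) hΦ2 4
        norm_num at this; linarith
      have h17 : 16 * Φ x ≤ Φ x ^ 4 * Φ x := mul_le_mul_of_nonneg_right h16 hΦ0
      have h2 : Φ x ≤ Φ x ^ 5 / 2 := by nlinarith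
      exact h1.trans (Real.exp_le_exp.2 h2)
    have hxle : x ≤ Real.exp (Φ x ^ 5) := by
      have := calc x = myF (Φ x) := (hkey x).symm
        _ ≤ Φ x * Real.exp (Φ x ^ 5 / 2) := myF_le hΦ0
        _ ≤ Real.exp (Φ x ^ 5 / 2) * Real.exp (Φ x ^ 5 / 2) := by
            apply mul_le_mul_of_nonneg_right hΦexp (Real.exp_pos _).le
        _ = Real.exp (Φ x ^ 5) := by rw [← Real.exp_add]; ring_nf
      exact this
    have hlogle : Real.log x ≤ Φ x ^ 5 := by
      rw [Real.log_le_iff_le_exp hx0]; exact hxle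
    calc (Real.log x) ^ ((1:ℝ)/5) ≤ (Φ x ^ 5) ^ ((1:ℝ)/5) :=
          Real.rpow_le_rpow (by linarith) hlogle (by norm_num)
      _ = Φ x := by
          rw [← Real.rpow_natCast (Φ x) 5, ← Real.rpow_mul hΦ0]
          norm_num
  -- upper bound
  have hub : Φ x ≤ 3 * (Real.log x) ^ ((1:ℝ)/5) := by
    have h1 : Real.exp ((Φ x - 1) ^ 5 / 2) ≤ x := by
      calc Real.exp ((Φ x - 1) ^ 5 / 2) ≤ myF (Φ x) := myF_ge (by linarith)
        _ = x := hkey x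
    have h2 : (Φ x - 1) ^ 5 ≤ 2 * Real.log x := by
      have := (Real.le_log_iff_exp_le hx0).2 h1
      linarith
    have hΦ1 : (0:ℝ) ≤ Φ x - 1 := by linarith
    have h3 : Φ x - 1 ≤ (2 * Real.log x) ^ ((1:ℝ)/5) := by
      calc Φ x - 1 = ((Φ x - 1) ^ 5) ^ ((1:ℝ)/5) := by
            rw [← Real.rpow_natCast (Φ x - 1) 5, ← Real.rpow_mul hΦ1]
            norm_num
        _ ≤ (2 * Real.log x) ^ ((1:ℝ)/5) :=
            Real.rpow_le_rpow (by positivity) h2 (by norm_num)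
    have h4 : (2 * Real.log x) ^ ((1:ℝ)/5) ≤ 2 * (Real.log x) ^ ((1:ℝ)/5) := by
      rw [Real.mul_rpow (by norm_num) (by linarith)]
      apply mul_le_mul_of_nonneg_right _ (Real.rpow_nonneg (by linarith) _)
      calc (2:ℝ) ^ ((1:ℝ)/5) ≤ (2:ℝ) ^ (1:ℝ) := by
            apply Real.rpow_le_rpow_of_exponent_le <;> norm_num
        _ = 2 := Real.rpow_one 2
    have h5 : (1:ℝ) ≤ (Real.log x) ^ ((1:ℝ)/5) :=
      Real.one_le_rpow hlog1 (by norm_num)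
    linarith
  exact ⟨by linarith [hlb], hub⟩
end

section
/- Let Φ : ℝ → ℝ satisfy Φ(0)=0 and Φ'(x)=exp(-Φ(x)^5/2), and set φ = Φ'. Then there exist constants c₁, c₂ > 0 such that for all sufficiently large x, c₁ / (x (ln x)^{4/5}) ≤ φ(x) ≤ c₂ / (x (ln x)^{4/5}). -/
open Real Set Filter

private lemma slope_le_aux {f f' : ℝ → ℝ} (hf : ∀ x, HasDerivAt f (f' x) x) {a b C : ℝ}
    (hab : a ≤ b) (h : ∀ t ∈ Set.Icc a b, f' t ≤ C) : f b - f a ≤ C * (b - a) := by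
  have hg : ∀ x, HasDerivAt (fun y => C * y - f y) (C - f' x) x := fun x => by
    exact (((hasDerivAt_id x).const_mul C).sub (hf x)).congr_deriv (by simp)
  have hmono : MonotoneOn (fun y => C * y - f y) (Set.Icc a b) := by
    apply monotoneOn_of_deriv_nonneg (convex_Icc a b)
    · exact fun x _ => ((hg x).differentiableAt).continuousAt.continuousWithinAt
    · exact fun x _ => ((hg x).differentiableAt).differentiableWithinAt
    · intro x hx
      rw [interior_Icc] at hx
      rw [(hg x).deriv]
      have := h x ⟨hx.1.le, hx.2.le⟩
      linarith
  have h2 := hmono (Set.left_mem_Icc.mpr hab) (Set.right_mem_Icc.mpr hab) hab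
  simp only at h2
  linarith

private lemma le_slope_aux {f f' : ℝ → ℝ} (hf : ∀ x, HasDerivAt f (f' x) x) {a b C : ℝ}
    (hab : a ≤ b) (h : ∀ t ∈ Set.Icc a b, C ≤ f' t) : C * (b - a) ≤ f b - f a := by
  have := slope_le_aux (f := fun x => -f x) (f' := fun x => -f' x)
      (fun x => (hf x).neg) hab (C := -C) (fun t ht => neg_le_neg (h t ht))
  linarith

/-- If `Φ 0 = 0`, `Φ' = φ` where `φ x = exp (-(Φ x)^5 / 2)`, then there are
constants `c₁, c₂ > 0` with `c₁ / (x (ln x)^{4/5}) ≤ φ x ≤ c₂ / (x (ln x)^{4/5})`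
for all sufficiently large `x`. -/
theorem stmt_4 (Φ φ : ℝ → ℝ) (h0 : Φ 0 = 0)
    (hφ : ∀ x : ℝ, φ x = Real.exp (-(Φ x) ^ 5 / 2))
    (hderiv : ∀ x : ℝ, HasDerivAt Φ (φ x) x) :
    ∃ c₁ c₂ : ℝ, 0 < c₁ ∧ 0 < c₂ ∧
      ∀ᶠ x in Filter.atTop,
        c₁ / (x * (Real.log x) ^ ((4 : ℝ) / 5)) ≤ φ x ∧
        φ x ≤ c₂ / (x * (Real.log x) ^ ((4 : ℝ) / 5)) := by
  have hφpos : ∀ x, 0 < φ x := fun x => by rw [hφ]; exact Real.exp_pos _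
  have hΦmono : ∀ a b : ℝ, a ≤ b → Φ a ≤ Φ b := by
    intro a b hab
    have := le_slope_aux hderiv hab (C := 0) (fun t _ => (hφpos t).le)
    linarith
  have hΦnn : ∀ x : ℝ, 0 ≤ x → 0 ≤ Φ x := by
    intro x hx
    rw [← h0]; exact hΦmono 0 x hx
  have hφle1 : ∀ x : ℝ, 0 ≤ x → φ x ≤ 1 := by
    intro x hx
    rw [hφ]
    have h1 := pow_nonneg (hΦnn x hx) 5
    calc Real.exp (-(Φ x) ^ 5 / 2) ≤ Real.exp 0 := Real.exp_le_exp.mpr (by linarith)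
    _ = 1 := Real.exp_zero
  have hΦlex : ∀ x : ℝ, 0 ≤ x → Φ x ≤ x := by
    intro x hx
    have := slope_le_aux hderiv hx (C := 1) (fun t ht => hφle1 t ht.1)
    rw [h0] at this
    linarith
  -- derivative of E(x) = exp(Φ x ^5/2) is (5/2)Φ x^4
  have hE : ∀ x, HasDerivAt (fun y => Real.exp (Φ y ^ 5 / 2)) (5 / 2 * Φ x ^ 4) x := by
    intro x
    have h1 : HasDerivAt (fun y => Φ y ^ 5 / 2) ((5:ℕ) * Φ x ^ 4 * φ x / 2) x :=
      (((hderiv x).pow 5)).div_const 2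
    have h2 := h1.exp
    convert h2 using 1
    rw [hφ]
    have key : Real.exp (Φ x ^ 5 / 2) * Real.exp (-(Φ x) ^ 5 / 2) = 1 := by
      rw [← Real.exp_add, show Φ x ^ 5 / 2 + -(Φ x) ^ 5 / 2 = 0 by ring, Real.exp_zero]
    push_cast
    linear_combination (-(5 * Φ x ^ 4 / 2)) * key
  have hE_le : ∀ a b : ℝ, 0 ≤ a → a ≤ b →
      Real.exp (Φ b ^ 5 / 2) - Real.exp (Φ a ^ 5 / 2) ≤ 5 / 2 * Φ b ^ 4 * (b - a) := by
    intro a b ha hab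
    apply slope_le_aux hE hab
    intro t ht
    have h1 : 0 ≤ Φ t := hΦnn t (le_trans ha ht.1)
    have h2 : Φ t ≤ Φ b := hΦmono t b ht.2
    have := pow_le_pow_left₀ h1 h2 4
    linarith
  have hE_ge : ∀ a b : ℝ, 0 ≤ a → a ≤ b →
      5 / 2 * Φ a ^ 4 * (b - a) ≤ Real.exp (Φ b ^ 5 / 2) - Real.exp (Φ a ^ 5 / 2) := by
    intro a b ha hab
    apply le_slope_aux hE hab
    intro t ht
    have h1 : 0 ≤ Φ a := hΦnn a ha
    have h2 : Φ a ≤ Φ t := hΦmono a t ht.1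
    have := pow_le_pow_left₀ h1 h2 4
    linarith
  -- Φ 4 ≥ 1
  have hΦ4 : 1 ≤ Φ 4 := by
    by_cases hc : ∀ t ∈ Set.Icc (0:ℝ) 4, Φ t ≤ 1
    · have hls := le_slope_aux hderiv (show (0:ℝ) ≤ 4 by norm_num) (C := 1/2) ?_
      · rw [h0] at hls; linarith
      · intro t ht
        rw [hφ]
        have h1 : 0 ≤ Φ t := hΦnn t ht.1
        have h2 : Φ t ^ 5 ≤ 1 := by
          calc Φ t ^ 5 ≤ 1 ^ 5 := pow_le_pow_left₀ h1 (hc t ht) 5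
          _ = 1 := one_pow 5
        have h3 := Real.add_one_le_exp (-(Φ t) ^ 5 / 2)
        linarith
    · push_neg at hc
      obtain ⟨t, ht, h1⟩ := hc
      exact le_trans h1.le (hΦmono t 4 ht.2)
  -- for x ≥ 8, Φ x ^ 5 ≥ 2 log x
  have hΦge : ∀ x : ℝ, 8 ≤ x → 2 * Real.log x ≤ Φ x ^ 5 := by
    intro x hx
    have h1 := hE_ge 4 x (by norm_num) (by linarith)
    have h2 : (1:ℝ) ≤ Φ 4 ^ 4 := by
      calc (1:ℝ) = 1 ^ 4 := by norm_num
      _ ≤ Φ 4 ^ 4 := pow_le_pow_left₀ (by norm_num) hΦ4 4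
    have hE4 := Real.exp_pos (Φ 4 ^ 5 / 2)
    have h3 : x ≤ Real.exp (Φ x ^ 5 / 2) := by nlinarith
    have h4 := Real.log_le_log (by linarith : (0:ℝ) < x) h3
    rw [Real.log_exp] at h4
    linarith
  have hloge3 : (1:ℝ) ≤ Real.log 3 := by
    rw [Real.le_log_iff_exp_le (by norm_num : (0:ℝ) < 3)]
    have := Real.exp_one_lt_d9
    linarith
  -- upper bound
  have hupper : ∀ x : ℝ, 64 ≤ x → φ x ≤ 1 / (x * Real.log x ^ ((4:ℝ)/5)) := by
    intro x hx
    have hx0 : (0:ℝ) < x := by linarith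
    set s := Real.sqrt x with hs
    have hsnn : 0 ≤ s := Real.sqrt_nonneg x
    have hss : s * s = x := Real.mul_self_sqrt hx0.le
    have hs8 : (8:ℝ) ≤ s := by nlinarith
    have hsx : s ≤ x := by nlinarith
    have hlogx : Real.log x = 2 * Real.log s := by
      rw [← hss, Real.log_mul (by linarith) (by linarith)]; ring
    have h1 : Real.log x ≤ Φ s ^ 5 := by
      have := hΦge s hs8
      linarith
    have hΦs0 : 0 ≤ Φ s := hΦnn s (by linarith)
    have hlogxnn : 0 ≤ Real.log x := by
      have : (0:ℝ) < Real.log x := Real.log_pos (by linarith)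
      linarith
    have h3 : Real.log x ^ ((4:ℝ)/5) ≤ Φ s ^ 4 := by
      have h4 : (Φ s : ℝ) ^ (4:ℕ) = (Φ s ^ (5:ℕ)) ^ ((4:ℝ)/5) := by
        rw [← Real.rpow_natCast (Φ s) 5, ← Real.rpow_mul hΦs0,
          ← Real.rpow_natCast (Φ s) 4]
        norm_num
      rw [h4]
      exact Real.rpow_le_rpow hlogxnn h1 (by norm_num)
    have h2 := hE_ge s x (by linarith) hsx
    have hEs := Real.exp_pos (Φ s ^ 5 / 2)
    have hxs : x / 2 ≤ x - s := by nlinarith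
    have hrnn : 0 ≤ Real.log x ^ ((4:ℝ)/5) := Real.rpow_nonneg hlogxnn _
    have h5 : x * Real.log x ^ ((4:ℝ)/5) ≤ Real.exp (Φ x ^ 5 / 2) := by
      nlinarith [mul_le_mul h3 hxs (by linarith) (pow_nonneg hΦs0 4)]
    have hLpos : 0 < x * Real.log x ^ ((4:ℝ)/5) :=
      mul_pos hx0 (Real.rpow_pos_of_pos (Real.log_pos (by linarith)) _)
    rw [hφ, show -(Φ x) ^ 5 / 2 = -(Φ x ^ 5 / 2) by ring, Real.exp_neg, inv_eq_one_div]
    exact one_div_le_one_div_of_le hLpos h5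
  -- lower bound
  have hlower : ∀ x : ℝ, 3 ≤ x → 1/31 / (x * Real.log x ^ ((4:ℝ)/5)) ≤ φ x := by
    intro x hx
    have hx0 : (0:ℝ) < x := by linarith
    have h1 := hE_le 0 x le_rfl hx0.le
    rw [h0] at h1
    norm_num at h1
    -- h1 : exp (Φ x ^5/2) - 1 ≤ 5/2 * Φ x^4 * x  (roughly)
    have hΦx : Φ x ≤ x := hΦlex x hx0.le
    have hΦnn' : 0 ≤ Φ x := hΦnn x hx0.le
    have hp4 : Φ x ^ 4 ≤ x ^ 4 := pow_le_pow_left₀ hΦnn' hΦx 4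
    have hx5 : (243:ℝ) ≤ x ^ 5 := by
      calc (243:ℝ) = 3 ^ 5 := by norm_num
      _ ≤ x ^ 5 := pow_le_pow_left₀ (by norm_num) hx 5
    have h2 : Real.exp (Φ x ^ 5 / 2) ≤ x ^ 6 := by nlinarith
    have h3 : Φ x ^ 5 ≤ 12 * Real.log x := by
      have h4 := Real.log_le_log (Real.exp_pos _) h2
      rw [Real.log_exp, Real.log_pow] at h4
      push_cast at h4
      linarith
    have hlog1 : (1:ℝ) ≤ Real.log x := le_trans hloge3 (Real.log_le_log (by norm_num) hx)
    have hlogxnn : 0 ≤ Real.log x := by linarith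
    have hL1 : (1:ℝ) ≤ Real.log x ^ ((4:ℝ)/5) := by
      calc (1:ℝ) = 1 ^ ((4:ℝ)/5) := (Real.one_rpow _).symm
      _ ≤ Real.log x ^ ((4:ℝ)/5) := Real.rpow_le_rpow (by norm_num) hlog1 (by norm_num)
    have h4 : Φ x ^ 4 ≤ 12 * Real.log x ^ ((4:ℝ)/5) := by
      have h5 : (Φ x : ℝ) ^ (4:ℕ) = (Φ x ^ (5:ℕ)) ^ ((4:ℝ)/5) := by
        rw [← Real.rpow_natCast (Φ x) 5, ← Real.rpow_mul hΦnn',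
          ← Real.rpow_natCast (Φ x) 4]
        norm_num
      have h6 : (Φ x ^ (5:ℕ)) ^ ((4:ℝ)/5) ≤ (12 * Real.log x) ^ ((4:ℝ)/5) :=
        Real.rpow_le_rpow (pow_nonneg hΦnn' 5) h3 (by norm_num)
      have h7 : ((12:ℝ) * Real.log x) ^ ((4:ℝ)/5)
          = (12:ℝ) ^ ((4:ℝ)/5) * Real.log x ^ ((4:ℝ)/5) :=
        Real.mul_rpow (by norm_num) hlogxnn
      have h8 : (12:ℝ) ^ ((4:ℝ)/5) ≤ 12 := by
        calc (12:ℝ) ^ ((4:ℝ)/5) ≤ 12 ^ (1:ℝ) :=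
          Real.rpow_le_rpow_of_exponent_le (by norm_num) (by norm_num)
        _ = 12 := Real.rpow_one 12
      have hrnn : 0 ≤ Real.log x ^ ((4:ℝ)/5) := Real.rpow_nonneg hlogxnn _
      calc (Φ x:ℝ) ^ (4:ℕ) = (Φ x ^ (5:ℕ)) ^ ((4:ℝ)/5) := h5
      _ ≤ (12 * Real.log x) ^ ((4:ℝ)/5) := h6
      _ = (12:ℝ) ^ ((4:ℝ)/5) * Real.log x ^ ((4:ℝ)/5) := h7
      _ ≤ 12 * Real.log x ^ ((4:ℝ)/5) := by nlinarith
    have hL3 : (3:ℝ) ≤ x * Real.log x ^ ((4:ℝ)/5) := by nlinarith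
    have h9 : Real.exp (Φ x ^ 5 / 2) ≤ 31 * (x * Real.log x ^ ((4:ℝ)/5)) := by nlinarith
    have hLpos : 0 < x * Real.log x ^ ((4:ℝ)/5) := by linarith
    rw [hφ, show -(Φ x) ^ 5 / 2 = -(Φ x ^ 5 / 2) by ring, Real.exp_neg, inv_eq_one_div]
    calc 1/31 / (x * Real.log x ^ ((4:ℝ)/5)) = 1 / (31 * (x * Real.log x ^ ((4:ℝ)/5))) := by
          ring
    _ ≤ 1 / Real.exp (Φ x ^ 5 / 2) := one_div_le_one_div_of_le (Real.exp_pos _) h9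
  refine ⟨1/31, 1, by norm_num, one_pos, ?_⟩
  filter_upwards [eventually_ge_atTop (64:ℝ)] with x hx
  exact ⟨hlower x (by linarith), hupper x hx⟩
end
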